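/- arXiv:2112.12050 — 2 statements merged into one kernel-verified Lean document; each statement's English description precedes it below -/
import Mathlib

section
/- Nye's formula: for a smooth map A : ℝ³ → so(3) (skew-symmetric matrix field), letting a = axl A, one has D a = (1/2) tr(Curl A) · Id − (Curl A)ᵀ, and equivalently Curl A = tr(D a) Id − (D a)ᵀ. -/
open Matrix

noncomputable section

/-- Partial derivative `∂ᵢ f` of a scalar field on `ℝ³`. -/
def pd (f : EuclideanSpace ℝ (Fin 3) → ℝ) (i : Fin 3) (x : EuclideanSpace ℝ (Fin 3)) : ℝ :=
  fderiv ℝ f x (EuclideanSpace.single i 1)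

/-- Row-wise curl of a vector field `u : ℝ³ → ℝ³`. -/
def curlVec (u : EuclideanSpace ℝ (Fin 3) → Fin 3 → ℝ) (x : EuclideanSpace ℝ (Fin 3)) :
    Fin 3 → ℝ :=
  ![pd (fun y => u y 2) 1 x - pd (fun y => u y 1) 2 x,
    pd (fun y => u y 0) 2 x - pd (fun y => u y 2) 0 x,
    pd (fun y => u y 1) 0 x - pd (fun y => u y 0) 1 x]

/-- Row-wise `Curl` of a matrix field. -/
def CurlMat (A : EuclideanSpace ℝ (Fin 3) → Matrix (Fin 3) (Fin 3) ℝ)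
    (x : EuclideanSpace ℝ (Fin 3)) : Matrix (Fin 3) (Fin 3) ℝ :=
  Matrix.of fun i j => curlVec (fun y => A y i) x j

/-- Jacobian matrix of a vector field. -/
def Jac (a : EuclideanSpace ℝ (Fin 3) → Fin 3 → ℝ) (x : EuclideanSpace ℝ (Fin 3)) :
    Matrix (Fin 3) (Fin 3) ℝ :=
  Matrix.of fun i j => pd (fun y => a y i) j x

/-- `axl` of a skew-symmetric matrix. -/
def axl (A : Matrix (Fin 3) (Fin 3) ℝ) : Fin 3 → ℝ := ![A 2 1, A 0 2, A 1 0]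

/-- Nye's formula. -/
theorem nye (A : EuclideanSpace ℝ (Fin 3) → Matrix (Fin 3) (Fin 3) ℝ)
    (hsmooth : ∀ i j, ContDiff ℝ (⊤ : ℕ∞) fun x => A x i j)
    (hskew : ∀ x, (A x)ᵀ = -(A x)) (x : EuclideanSpace ℝ (Fin 3)) :
    Jac (fun y => axl (A y)) x =
      ((2 : ℝ)⁻¹ * (CurlMat A x).trace) • (1 : Matrix (Fin 3) (Fin 3) ℝ) - (CurlMat A x)ᵀ ∧
    CurlMat A x =
      (Jac (fun y => axl (A y)) x).trace • (1 : Matrix (Fin 3) (Fin 3) ℝ) -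
        (Jac (fun y => axl (A y)) x)ᵀ := by
  have hsk : ∀ i j (y : EuclideanSpace ℝ (Fin 3)), A y j i = -(A y i j) := fun i j y => by
    have := congrFun (congrFun (hskew y) i) j
    simpa [Matrix.transpose_apply] using this
  have pdneg : ∀ i j k, pd (fun y => A y j i) k x = -pd (fun y => A y i j) k x := by
    intro i j k
    have h : (fun y => A y j i) = fun y => -(A y i j) := funext fun y => hsk i j y
    simp only [pd, h, fderiv_fun_neg, ContinuousLinearMap.neg_apply]
  have pddiag : ∀ i k, pd (fun y => A y i i) k x = 0 := by
    intro i k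
    have h : (fun y => A y i i) = fun _ => (0:ℝ) := funext fun y => by
      have := hsk i i y; linarith
    simp [pd, h]
  have h10 := pdneg 0 1
  have h20 := pdneg 0 2
  have h21 := pdneg 1 2
  have h00 := pddiag 0
  have h11 := pddiag 1
  have h22 := pddiag 2
  constructor <;>
  · ext i j
    fin_cases i <;> fin_cases j <;>
      simp [Jac, CurlMat, curlVec, axl, Matrix.trace, Matrix.diag, Fin.sum_univ_three,
        Matrix.one_apply, h10, h20, h21, h00, h11, h22] <;> ring


end
end

section
/- If a smooth matrix field P : Ω → ℝ^{3×3} on a connected open set Ω ⊆ ℝ³ satisfies sym P ≡ 0 and Curl P ≡ 0, then P is a constant skew-symmetric matrix. -/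
open Matrix

noncomputable section

def symPart (P : Matrix (Fin 3) (Fin 3) ℝ) : Matrix (Fin 3) (Fin 3) ℝ :=
  (2 : ℝ)⁻¹ • (P + Pᵀ)

lemma const_of_fderiv_zero_aux {E : Type*} [NormedAddCommGroup E] [NormedSpace ℝ E]
    {Ω : Set E} (hΩ : IsOpen Ω) (hpre : IsPreconnected Ω) {f : E → ℝ}
    (hd : ∀ x ∈ Ω, DifferentiableAt ℝ f x) (h0 : ∀ x ∈ Ω, fderiv ℝ f x = 0)
    {x y : E} (hx : x ∈ Ω) (hy : y ∈ Ω) : f y = f x := by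
  have hloc : ∀ z ∈ Ω, ∀ᶠ w in nhds z, f w = f z := by
    intro z hz
    obtain ⟨ε, hε, hball⟩ := Metric.isOpen_iff.1 hΩ z hz
    filter_upwards [Metric.ball_mem_nhds z hε] with w hw
    exact (convex_ball z ε).is_const_of_fderivWithin_eq_zero
      (fun u hu => (hd u (hball hu)).differentiableWithinAt)
      (fun u hu => by
        rw [fderivWithin_of_isOpen Metric.isOpen_ball hu]; exact h0 u (hball hu))
      hw (Metric.mem_ball_self hε)
  by_contra hne
  have hsub : Ω ⊆ interior {w | f w = f x} ∪ interior {w | f w ≠ f x} := by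
    intro z hz
    rcases eq_or_ne (f z) (f x) with h | h
    · left
      rw [mem_interior_iff_mem_nhds]
      filter_upwards [hloc z hz] with w hw
      rw [hw]; exact h
    · right
      rw [mem_interior_iff_mem_nhds]
      filter_upwards [hloc z hz] with w hw
      rw [hw]; exact h
  have h1 : (Ω ∩ interior {w | f w = f x}).Nonempty := by
    refine ⟨x, hx, ?_⟩
    rw [mem_interior_iff_mem_nhds]
    filter_upwards [hloc x hx] with w hw
    exact hw
  have h2 : (Ω ∩ interior {w | f w ≠ f x}).Nonempty := by
    refine ⟨y, hy, ?_⟩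
    rw [mem_interior_iff_mem_nhds]
    filter_upwards [hloc y hy] with w hw
    rw [hw]; exact hne
  obtain ⟨z, hzΩ, hz1, hz2⟩ := hpre _ _ isOpen_interior isOpen_interior hsub h1 h2
  have e1 := interior_subset hz1
  have e2 := interior_subset hz2
  simp only [Set.mem_setOf_eq] at e1 e2
  exact e2 e1

theorem symZero_curlZero_implies_const_skew
    (Ω : Set (EuclideanSpace ℝ (Fin 3))) (hΩ : IsOpen Ω) (hconn : IsConnected Ω)
    (P : EuclideanSpace ℝ (Fin 3) → Matrix (Fin 3) (Fin 3) ℝ)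
    (hsmooth : ∀ i j, ContDiffOn ℝ (⊤ : ℕ∞) (fun x => P x i j) Ω)
    (hsym : ∀ x ∈ Ω, symPart (P x) = 0)
    (hcurl : ∀ x ∈ Ω, CurlMat P x = 0) :
    ∃ A : Matrix (Fin 3) (Fin 3) ℝ, Aᵀ = -A ∧ ∀ x ∈ Ω, P x = A := by
  obtain ⟨x₀, hx₀⟩ := hconn.nonempty
  have hentry : ∀ x ∈ Ω, ∀ i j, P x j i = - P x i j := by
    intro x hx i j
    have h := congrFun (congrFun (hsym x hx) i) j
    simp [symPart, Matrix.add_apply, Matrix.transpose_apply, Matrix.smul_apply] at h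
    linarith
  have hdiff : ∀ i j, ∀ x ∈ Ω, DifferentiableAt ℝ (fun y => P y i j) x := fun i j x hx =>
    ((hsmooth i j x hx).contDiffAt (hΩ.mem_nhds hx)).differentiableAt (by simp)
  have hskew_pd : ∀ (i j k : Fin 3), ∀ x ∈ Ω,
      pd (fun y => P y j i) k x = - pd (fun y => P y i j) k x := by
    intro i j k x hx
    have hev : (fun y => P y j i) =ᶠ[nhds x] (fun y => - P y i j) :=
      Filter.eventuallyEq_of_mem (hΩ.mem_nhds hx) (fun y hy => hentry y hy i j)
    unfold pd
    rw [hev.fderiv_eq, fderiv_fun_neg]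
    simp
  have hcurl' : ∀ x ∈ Ω, ∀ i j, curlVec (fun y => P y i) x j = 0 := by
    intro x hx i j
    have h := congrFun (congrFun (hcurl x hx) i) j
    simpa [CurlMat] using h
  have hpd0 : ∀ (i j k : Fin 3), ∀ x ∈ Ω, pd (fun y => P y i j) k x = 0 := by
    intro i j k x hx
    have hC : ∀ i' : Fin 3,
        (pd (fun y => P y i' 2) 1 x = pd (fun y => P y i' 1) 2 x) ∧
        (pd (fun y => P y i' 0) 2 x = pd (fun y => P y i' 2) 0 x) ∧
        (pd (fun y => P y i' 1) 0 x = pd (fun y => P y i' 0) 1 x) := by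
      intro i'
      have h0 := hcurl' x hx i' 0
      have h1 := hcurl' x hx i' 1
      have h2 := hcurl' x hx i' 2
      simp [curlVec] at h0 h1 h2
      exact ⟨by linarith, by linarith, by linarith⟩
    obtain ⟨h00, h01, h02⟩ := hC 0
    obtain ⟨h10, h11, h12⟩ := hC 1
    obtain ⟨h20, h21, h22⟩ := hC 2
    have s010 := hskew_pd 0 1 0 x hx; have s011 := hskew_pd 0 1 1 x hx
    have s012 := hskew_pd 0 1 2 x hx
    have s020 := hskew_pd 0 2 0 x hx; have s021 := hskew_pd 0 2 1 x hx
    have s022 := hskew_pd 0 2 2 x hx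
    have s120 := hskew_pd 1 2 0 x hx; have s121 := hskew_pd 1 2 1 x hx
    have s122 := hskew_pd 1 2 2 x hx
    have d00 := hskew_pd 0 0 0 x hx; have d01 := hskew_pd 0 0 1 x hx
    have d02 := hskew_pd 0 0 2 x hx
    have d10 := hskew_pd 1 1 0 x hx; have d11 := hskew_pd 1 1 1 x hx
    have d12 := hskew_pd 1 1 2 x hx
    have d20 := hskew_pd 2 2 0 x hx; have d21 := hskew_pd 2 2 1 x hx
    have d22 := hskew_pd 2 2 2 x hx
    -- diagonal entries
    have D00 : pd (fun y => P y 0 0) 0 x = 0 := by linarith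
    have D01 : pd (fun y => P y 0 0) 1 x = 0 := by linarith
    have D02 : pd (fun y => P y 0 0) 2 x = 0 := by linarith
    have D10 : pd (fun y => P y 1 1) 0 x = 0 := by linarith
    have D11 : pd (fun y => P y 1 1) 1 x = 0 := by linarith
    have D12 : pd (fun y => P y 1 1) 2 x = 0 := by linarith
    have D20 : pd (fun y => P y 2 2) 0 x = 0 := by linarith
    have D21 : pd (fun y => P y 2 2) 1 x = 0 := by linarith
    have D22 : pd (fun y => P y 2 2) 2 x = 0 := by linarith
    -- off-diagonal entries: a = pd(P 1 2), b = pd(P 2 0), c = pd(P 0 1)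
    have A1 : pd (fun y => P y 1 2) 1 x = 0 := by linarith
    have A2 : pd (fun y => P y 1 2) 2 x = 0 := by linarith
    have B0 : pd (fun y => P y 2 0) 0 x = 0 := by linarith
    have B2 : pd (fun y => P y 2 0) 2 x = 0 := by linarith
    have C0 : pd (fun y => P y 0 1) 0 x = 0 := by linarith
    have C1 : pd (fun y => P y 0 1) 1 x = 0 := by linarith
    have A0 : pd (fun y => P y 1 2) 0 x = 0 := by linarith
    have B1 : pd (fun y => P y 2 0) 1 x = 0 := by linarith
    have C2 : pd (fun y => P y 0 1) 2 x = 0 := by linarith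
    have A0' : pd (fun y => P y 2 1) 0 x = 0 := by linarith
    have A1' : pd (fun y => P y 2 1) 1 x = 0 := by linarith
    have A2' : pd (fun y => P y 2 1) 2 x = 0 := by linarith
    have B0' : pd (fun y => P y 0 2) 0 x = 0 := by linarith
    have B1' : pd (fun y => P y 0 2) 1 x = 0 := by linarith
    have B2' : pd (fun y => P y 0 2) 2 x = 0 := by linarith
    have C0' : pd (fun y => P y 1 0) 0 x = 0 := by linarith
    have C1' : pd (fun y => P y 1 0) 1 x = 0 := by linarith
    have C2' : pd (fun y => P y 1 0) 2 x = 0 := by linarith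
    fin_cases i <;> fin_cases j <;> fin_cases k <;> assumption
  have hfz : ∀ i j, ∀ x ∈ Ω, fderiv ℝ (fun y => P y i j) x = 0 := by
    intro i j x hx
    apply ContinuousLinearMap.coe_injective
    refine Module.Basis.ext (EuclideanSpace.basisFun (Fin 3) ℝ).toBasis (fun k => ?_)
    have := hpd0 i j k x hx
    simpa [pd, EuclideanSpace.basisFun_apply] using this
  refine ⟨P x₀, ?_, ?_⟩
  · ext i j
    simp only [Matrix.transpose_apply, Matrix.neg_apply]
    exact hentry x₀ hx₀ i j
  · intro x hx
    ext i j
    exact const_of_fderiv_zero_aux hΩ hconn.isPreconnected (hdiff i j) (hfz i j) hx₀ hx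

end
end
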